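/- Assume conditions S1–S4 on the initial measure μ₀. Then the limit correlation functions satisfy |𝐪₀^{ij}(z)| ≤ C e₀ φ^{1/2}(|z|) for z ∈ ℤ^d, hence 𝐪₀^{ij} ∈ ℓ¹(ℤ^d), and their Fourier transforms 𝐪̂₀^{ij}(θ) = ∑_{z∈ℤ^d} 𝐪₀^{ij}(z)e^{iz·θ} are continuous on 𝕋^d, for i,j = 0,1. -/

import Mathlib

open MeasureTheory Filter Topology Matrix
open scoped BigOperators Real ComplexOrder ENNReal NNReal

noncomputable section

namespace HCryst

variable (d n : ℕ) [NeZero d]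

/-- The lattice `ℤ^d`. -/
abbrev Lat := Fin d → ℤ

/-- The open half-lattice `ℤ^d_+ = {z : z₁ > 0}`. -/
abbrev LatP := {z : Fin d → ℤ // 0 < z 0}

/-- Reflection `z ↦ z̃ = (−z₁, z̄)`. -/
def til (z : Lat d) : Lat d := Function.update z 0 (-(z 0))

/-- `|z|²`. -/
def zsq (z : Lat d) : ℝ := ∑ i, ((z i : ℝ))^2

/-- Euclidean norm `|z|` of a lattice point. -/
def znorm (z : Lat d) : ℝ := Real.sqrt (zsq d z)

/-- Values of the field at one site: `ℝ^n × ℝ^n`. -/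
abbrev Pt := (Fin n → ℝ) × (Fin n → ℝ)

/-- Field configurations: functions `ℤ^d → ℝ^n × ℝ^n`. -/
abbrev Conf := Lat d → Pt n

/-- Squared Euclidean length `|Y(z)|² = |Y⁰(z)|² + |Y¹(z)|²`. -/
def vsq (v : Pt n) : ℝ := (∑ a, (v.1 a)^2) + (∑ a, (v.2 a)^2)

/-- The weight `(1+|z|²)^α`. -/
def wt (α : ℝ) (z : Lat d) : ℝ := (1 + zsq d z) ^ α

/-- Membership in `H_α`: the weighted square norm is finite. -/
def MemH (α : ℝ) (X : Conf d n) : Prop :=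
  Summable fun z : Lat d => vsq n (X z) * wt d α z

/-- The squared norm `‖X‖²_α`. -/
def normSqH (α : ℝ) (X : Conf d n) : ℝ := ∑' z : Lat d, vsq n (X z) * wt d α z

/-- A half-space configuration: vanishes unless `z₁ > 0` (this includes the
zero boundary condition at `z₁ = 0`). -/
def PlusSupp (Y : Conf d n) : Prop := ∀ z : Lat d, ¬ (0 < z 0) → Y z = 0

/-- Membership in `H_{α,+}`. -/
def MemHP (α : ℝ) (Y : Conf d n) : Prop :=
  Summable fun z : LatP d => vsq n (Y z.1) * wt d α z.1

/-- The squared norm `‖Y‖²_{α,+}`. -/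
def normSqHP (α : ℝ) (Y : Conf d n) : ℝ := ∑' z : LatP d, vsq n (Y z.1) * wt d α z.1

/-- `‖Y‖²_{α,+}` with values in `ℝ≥0∞`. -/
def enormSqHP (α : ℝ) (Y : Conf d n) : ℝ≥0∞ :=
  ∑' z : LatP d, ENNReal.ofReal (vsq n (Y z.1) * wt d α z.1)

/-- Frobenius norm of a real matrix. -/
def mnormR {m : Type*} [Fintype m] (M : Matrix m m ℝ) : ℝ :=
  Real.sqrt (∑ i, ∑ j, (M i j)^2)

/-- Frobenius norm of a complex matrix. -/
def mnormC {m : Type*} [Fintype m] (M : Matrix m m ℂ) : ℝ :=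
  Real.sqrt (∑ i, ∑ j, ‖M i j‖^2)

variable (V : Lat d → Matrix (Fin n) (Fin n) ℝ)

/-- Condition E1: exponential decay of the interaction matrix. -/
def CondE1 : Prop :=
  ∃ C γ : ℝ, 0 < C ∧ 0 < γ ∧ ∀ z : Lat d, mnormR (V z) ≤ C * Real.exp (-γ * znorm d z)

/-- Condition E2: `V_{lk}(−z) = V_{kl}(z)`. -/
def CondE2 : Prop := ∀ (z : Lat d) (k l : Fin n), V (-z) l k = V z k l

/-- The symmetry condition `V(z) = V(z̃)`. -/
def CondSym : Prop := ∀ z : Lat d, V (til d z) = V z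

/-- The convolution operator `(𝓥u)(z) = ∑_{z'} V(z−z') u(z')`. -/
def convV (u : Lat d → Fin n → ℝ) (z : Lat d) : Fin n → ℝ :=
  ∑' z' : Lat d, (V (z - z')).mulVec (u z')

/-- The half-space operator `(𝓥₊u)(z) = ∑_{z'∈ℤ^d_+} (V(z−z') − V(z−z̃')) u(z')`. -/
def convVP (u : Lat d → Fin n → ℝ) (z : Lat d) : Fin n → ℝ :=
  ∑' z' : LatP d, ((V (z - z'.1) - V (z - til d z'.1)).mulVec (u z'.1))

/-- `X : ℝ → H_α` is a solution of the whole-space dynamics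
`Ẋ = 𝓐X`, lying in `C(ℝ, H_α)`. -/
def IsSol (α : ℝ) (X : ℝ → Conf d n) : Prop :=
  (∀ t, MemH d n α (X t)) ∧
  (∀ (z : Lat d) (t : ℝ), HasDerivAt (fun s => (X s z).1) ((X t z).2) t) ∧
  (∀ (z : Lat d) (t : ℝ), HasDerivAt (fun s => (X s z).2)
      (-(convV d n V (fun w => (X t w).1) z)) t) ∧
  (∀ t : ℝ, ∀ ε > (0:ℝ), ∃ δ > (0:ℝ), ∀ s : ℝ, |s - t| < δ →
      normSqH d n α (X s - X t) < ε)

/-- `Y : ℝ → H_{α,+}` is a solution of the half-space mixed problem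
(zero boundary condition included in `PlusSupp`), lying in `C(ℝ, H_{α,+})`. -/
def IsSolP (α : ℝ) (Y : ℝ → Conf d n) : Prop :=
  (∀ t, PlusSupp d n (Y t)) ∧
  (∀ t, MemHP d n α (Y t)) ∧
  (∀ z : Lat d, 0 < z 0 → ∀ t : ℝ, HasDerivAt (fun s => (Y s z).1) ((Y t z).2) t) ∧
  (∀ z : Lat d, 0 < z 0 → ∀ t : ℝ, HasDerivAt (fun s => (Y s z).2)
      (-(convVP d n V (fun w => (Y t w).1) z)) t) ∧
  (∀ t : ℝ, ∀ ε > (0:ℝ), ∃ δ > (0:ℝ), ∀ s : ℝ, |s - t| < δ →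
      normSqHP d n α (Y s - Y t) < ε)

/-- `z·θ`. -/
def zdot (z : Lat d) (θ : Fin d → ℝ) : ℝ := ∑ i, (z i : ℝ) * θ i

/-- Fourier transform `V̂(θ) = ∑_z V(z) e^{i z·θ}`. -/
def Vhat (θ : Fin d → ℝ) : Matrix (Fin n) (Fin n) ℂ :=
  Matrix.of fun k l => ∑' z : Lat d, Complex.exp (Complex.I * (zdot d z θ : ℂ)) * ((V z k l : ℝ) : ℂ)

/-- Condition E3: `V̂(θ) ≥ 0`. -/
def CondE3 : Prop := ∀ θ : Fin d → ℝ, (Vhat d n V θ).PosSemidef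

/-- `Ω(θ) = V̂(θ)^{1/2}`. -/
def OmegaM (h : CondE3 d n V) (θ : Fin d → ℝ) : Matrix (Fin n) (Fin n) ℂ :=
  ((h θ).1.eigenvectorUnitary : Matrix (Fin n) (Fin n) ℂ) *
    diagonal (((↑) : ℝ → ℂ) ∘ Real.sqrt ∘ (h θ).1.eigenvalues) *
    (star (h θ).1.eigenvectorUnitary : Matrix (Fin n) (Fin n) ℂ)

/-- Fundamental domain of the torus `𝕋^d`. -/
def box : Set (Fin d → ℝ) := Set.univ.pi fun _ : Fin d => Set.Ioc (-Real.pi) Real.pi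

/-- Index type for `2n × 2n` block matrices. -/
abbrev I2 := Fin n ⊕ Fin n

/-- The generator `Â(θ) = [[0,1],[−V̂(θ),0]]`. -/
def Ahat (θ : Fin d → ℝ) : Matrix (I2 n) (I2 n) ℂ :=
  Matrix.fromBlocks 0 1 (-(Vhat d n V θ)) 0

/-- The (complex) Green function `G_t(z) = (2π)^{-d} ∫_{𝕋^d} e^{−iz·θ} exp(Â(θ)t) dθ`. -/
def GreenC (t : ℝ) (z : Lat d) : Matrix (I2 n) (I2 n) ℂ :=
  Matrix.of fun a b => (((2*Real.pi)^d : ℝ) : ℂ)⁻¹ *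
    ∫ θ in box d, Complex.exp (-(Complex.I) * (zdot d z θ : ℂ)) *
      (NormedSpace.exp (t • Ahat d n V θ) a b)

/-- The real Green function (the Green function is real-valued). -/
def GreenR (t : ℝ) (z : Lat d) : Matrix (I2 n) (I2 n) ℝ :=
  (GreenC d n V t z).map Complex.re

/-- `Y(z) ∈ ℝ^n × ℝ^n` viewed as a `2n`-vector. -/
def comp2 (v : Pt n) : I2 n → ℝ := Sum.elim v.1 v.2

/-- A `2n`-vector viewed as an element of `ℝ^n × ℝ^n`. -/
def mk2 (w : I2 n → ℝ) : Pt n := (fun a => w (Sum.inl a), fun a => w (Sum.inr a))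

/-- Action of a `2n × 2n` matrix on `ℝ^n × ℝ^n`. -/
def mul2 (M : Matrix (I2 n) (I2 n) ℝ) (v : Pt n) : Pt n := mk2 n (M.mulVec (comp2 n v))

/-- The half-space Green function `G_{t,+}(z,z') = G_t(z−z') − G_t(z−z̃')`. -/
def GreenPlus (t : ℝ) (z z' : Lat d) : Matrix (I2 n) (I2 n) ℝ :=
  GreenR d n V t (z - z') - GreenR d n V t (z - til d z')

/-- The solution operator `U₊(t)` of the half-space problem, given by the
Green function representation `Y(z,t) = ∑_{z'∈ℤ^d_+} G_{t,+}(z,z') Y₀(z')`. -/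
def Uplus (t : ℝ) (Y : Conf d n) : Conf d n := fun z =>
  if 0 < z 0 then ∑' z' : LatP d, mul2 n (GreenPlus d n V t z z'.1) (Y z'.1) else 0

/-- The measure `μ_t`, distribution of the random solution `Y(t)`. -/
def μt (μ₀ : Measure (Conf d n)) (t : ℝ) : Measure (Conf d n) := μ₀.map (Uplus d n V t)

/-- The correlation matrix `Q_μ(z,z') = E (Y(z) ⊗ Y(z'))` (a `2n×2n` matrix). -/
def Qmat (μ : Measure (Conf d n)) (z z' : Lat d) : Matrix (I2 n) (I2 n) ℝ :=
  Matrix.of fun a b => ∫ Y : Conf d n, comp2 n (Y z) a * comp2 n (Y z') b ∂μ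

/-- Condition S1: zero mean. -/
def CondS1 (μ : Measure (Conf d n)) : Prop :=
  ∀ (z : Lat d) (a : I2 n), Integrable (fun Y : Conf d n => comp2 n (Y z) a) μ ∧
    ∫ Y : Conf d n, comp2 n (Y z) a ∂μ = 0

/-- Second moments exist. -/
def FinVar (μ : Measure (Conf d n)) : Prop :=
  ∀ (z z' : Lat d) (a b : I2 n),
    Integrable (fun Y : Conf d n => comp2 n (Y z) a * comp2 n (Y z') b) μ

/-- Condition S3: finite variance and mean energy density bounded by `e₀`. -/
def CondS3 (μ : Measure (Conf d n)) (e₀ : ℝ) : Prop :=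
  FinVar d n μ ∧ ∀ z : Lat d, ∑ a : I2 n, Qmat d n μ z z a a ≤ e₀

/-- Translation of a configuration. -/
def shift (h : Lat d) (Y : Conf d n) : Conf d n := fun z => Y (z - h)

/-- Condition S2: the correlations have the form `q₀(z₁,z₁',z̄−z̄')`, vanish at
the boundary, and converge as `z₁, z₁' → +∞` to correlations `𝐪₀(z−z')` of a
translation-invariant zero-mean measure on `H_α`. -/
def CondS2 (α : ℝ) (μ : Measure (Conf d n)) (q0 : Lat d → Matrix (I2 n) (I2 n) ℝ) : Prop :=
  (∀ z z' w w' : Lat d, z 0 = w 0 → z' 0 = w' 0 →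
      (∀ i : Fin d, i ≠ 0 → z i - z' i = w i - w' i) →
      Qmat d n μ z z' = Qmat d n μ w w') ∧
  (∀ z z' : Lat d, z 0 = 0 ∨ z' 0 = 0 → Qmat d n μ z z' = 0) ∧
  (∀ z : Lat d, Tendsto (fun y : ℕ =>
      Qmat d n μ (Function.update z 0 (z 0 + y)) (fun i => if i = 0 then (y:ℤ) else 0))
      atTop (𝓝 (q0 z))) ∧
  (∃ ν : Measure (Conf d n), IsProbabilityMeasure ν ∧
     (∀ h : Lat d, ν.map (shift d n h) = ν) ∧
     CondS1 d n ν ∧ FinVar d n ν ∧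
     (∀ z z' : Lat d, Qmat d n ν z z' = q0 (z - z')) ∧
     ν {X : Conf d n | MemH d n α X} = 1)

/-- The σ-algebra generated by the values `Y(z)`, `z ∈ A`. -/
def cylSig (A : Set (Lat d)) : MeasurableSpace (Conf d n) :=
  MeasurableSpace.comap (fun (Y : Conf d n) (z : A) => Y z.1) inferInstance

/-- The Ibragimov mixing coefficient `φ(r)` of `μ`. -/
def phiMix (μ : Measure (Conf d n)) (r : ℝ) : ℝ :=
  sSup {x : ℝ | ∃ A B : Set (Lat d), (∀ a ∈ A, 0 < a 0) ∧ (∀ b ∈ B, 0 < b 0) ∧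
    (∀ a ∈ A, ∀ b ∈ B, r ≤ znorm d (a - b)) ∧
    ∃ SA SB : Set (Conf d n),
      MeasurableSet[cylSig d n A] SA ∧ MeasurableSet[cylSig d n B] SB ∧
      0 < μ SB ∧
      x = |(μ (SA ∩ SB)).toReal - (μ SA).toReal * (μ SB).toReal| / (μ SB).toReal}

/-- Condition S4: strong uniform Ibragimov mixing together with the
integrability `∫₀^∞ r^{d−1} φ^{1/2}(r) dr < ∞`. -/
def CondS4 (μ : Measure (Conf d n)) : Prop :=
  Tendsto (phiMix d n μ) atTop (𝓝 0) ∧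
  IntegrableOn (fun r : ℝ => r ^ (d - 1) * Real.sqrt (phiMix d n μ r)) (Set.Ioi 0)

/-- `μ` is a Borel probability measure on `H_{α,+}`. -/
def ProbHP (α : ℝ) (μ : Measure (Conf d n)) : Prop :=
  IsProbabilityMeasure μ ∧ μ {Y : Conf d n | PlusSupp d n Y ∧ MemHP d n α Y} = 1

/-- The set on which the measures are concentrated. -/
def suppSet (α : ℝ) : Set (Conf d n) := {Y : Conf d n | PlusSupp d n Y ∧ MemHP d n α Y}

/-- Bounded functionals on `H_{α,+}`, continuous with respect to the norm of `H_{α,+}`. -/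
def BCtest (α : ℝ) (f : Conf d n → ℝ) : Prop :=
  (∃ M : ℝ, ∀ Y, |f Y| ≤ M) ∧
  (∀ Y ∈ suppSet d n α, ∀ ε > (0:ℝ), ∃ δ > (0:ℝ), ∀ Y' ∈ suppSet d n α,
     normSqHP d n α (Y' - Y) < δ → |f Y' - f Y| < ε)

/-- `⟨v,w⟩` in `ℝ^n × ℝ^n`. -/
def dot2 (v w : Pt n) : ℝ := (∑ a, v.1 a * w.1 a) + (∑ a, v.2 a * w.2 a)

/-- The pairing `⟨Y,Ψ⟩₊ = ∑_{z∈ℤ^d_+} Y(z)·Ψ(z)`. -/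
def pairP (Y Ψ : Conf d n) : ℝ := ∑' z : LatP d, dot2 n (Y z.1) (Ψ z.1)

/-- A measure is Gaussian if all its finite-dimensional linear images are Gaussian. -/
def IsGaussianOn (μ : Measure (Conf d n)) : Prop :=
  ∀ Ψ : Conf d n, {z : Lat d | Ψ z ≠ 0}.Finite →
    ∃ (m : ℝ) (v : NNReal),
      μ.map (fun Y : Conf d n => pairP d n Y Ψ) = ProbabilityTheory.gaussianReal m v

/-- Partial derivative `∂_{θ_i}`. -/
def pder (i : Fin d) (f : (Fin d → ℝ) → ℝ) (θ : Fin d → ℝ) : ℝ :=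
  fderiv ℝ f θ (Pi.single i 1)

/-- Hessian matrix of second partial derivatives. -/
def hess (f : (Fin d → ℝ) → ℝ) (θ : Fin d → ℝ) : Matrix (Fin d) (Fin d) ℝ :=
  Matrix.of fun i j => pder d i (fun x => pder d j f x) θ

variable (s : ℕ)

/-- The data `(ω_σ, Π_σ, 𝓒_*)` is a spectral decomposition of `Ω(θ) = V̂(θ)^{1/2}`
as in Lemma 2.2: `𝓒_*` is a closed Lebesgue-null set; off `𝓒_*` the band functions
`ω_σ` and spectral projections `Π_σ` are real-analytic, `Π_σ` are orthogonal
projections of constant rank, `ω_1 < … < ω_s` are nonnegative, and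
`Ω = ∑ ω_σ Π_σ`. -/
def SpecHyp (h : CondE3 d n V) (ω : Fin s → (Fin d → ℝ) → ℝ)
    (P : Fin s → (Fin d → ℝ) → Matrix (Fin n) (Fin n) ℂ)
    (Cs : Set (Fin d → ℝ)) : Prop :=
  IsClosed Cs ∧ MeasureTheory.volume Cs = 0 ∧ s ≤ n ∧
  ∀ θ : Fin d → ℝ, θ ∉ Cs →
    (OmegaM d n V h θ = ∑ σ : Fin s, (ω σ θ : ℂ) • P σ θ) ∧
    (∀ σ, (P σ θ).IsHermitian) ∧
    (∀ σ τ : Fin s, P σ θ * P τ θ = if σ = τ then P σ θ else 0) ∧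
    (∑ σ : Fin s, P σ θ) = 1 ∧
    (∀ σ τ : Fin s, σ < τ → ω σ θ < ω τ θ) ∧ (∀ σ, 0 ≤ ω σ θ) ∧
    (∀ σ, AnalyticAt ℝ (ω σ) θ) ∧
    (∀ σ (k l : Fin n), AnalyticAt ℝ (fun θ' => P σ θ' k l) θ) ∧
    (∀ σ, ∀ θ' ∉ Cs, (P σ θ).trace = (P σ θ').trace)

/-- Condition E4: `det Hess(ω_σ)` does not vanish identically outside `𝓒_*`. -/
def CondE4 (ω : Fin s → (Fin d → ℝ) → ℝ) (Cs : Set (Fin d → ℝ)) : Prop :=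
  ∀ σ : Fin s, ∃ θ, θ ∉ Cs ∧ (hess d (ω σ) θ).det ≠ 0

/-- Condition E5: no identity `ω_σ ± ω_{σ'} ≡ const ≠ 0` on `𝕋^d∖𝓒_*`. -/
def CondE5 (ω : Fin s → (Fin d → ℝ) → ℝ) (Cs : Set (Fin d → ℝ)) : Prop :=
  ∀ σ τ : Fin s, σ ≠ τ → ∀ c : ℝ, c ≠ 0 →
    (∃ θ, θ ∉ Cs ∧ ω σ θ + ω τ θ ≠ c) ∧ (∃ θ, θ ∉ Cs ∧ ω σ θ - ω τ θ ≠ c)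

/-- Condition E6: `‖V̂(θ)^{-1}‖ ∈ L¹(𝕋^d)`. -/
def CondE6 : Prop := IntegrableOn (fun θ => mnormC ((Vhat d n V θ)⁻¹)) (box d)

/-- The matrix `C(θ) = [[0, Ω(θ)^{-1}], [−Ω(θ), 0]]`. -/
def Cmat (h : CondE3 d n V) (θ : Fin d → ℝ) : Matrix (I2 n) (I2 n) ℂ :=
  Matrix.fromBlocks 0 (OmegaM d n V h θ)⁻¹ (-(OmegaM d n V h θ)) 0

/-- The block-diagonal projection `diag(Π_σ(θ), Π_σ(θ))` acting on `2n`-vectors. -/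
def P2 (P : Fin s → (Fin d → ℝ) → Matrix (Fin n) (Fin n) ℂ) (σ : Fin s)
    (θ : Fin d → ℝ) : Matrix (I2 n) (I2 n) ℂ :=
  Matrix.fromBlocks (P σ θ) 0 0 (P σ θ)

/-- Fourier transform of a matrix-valued function on the lattice. -/
def fourierM (q : Lat d → Matrix (I2 n) (I2 n) ℝ) (θ : Fin d → ℝ) :
    Matrix (I2 n) (I2 n) ℂ :=
  Matrix.of fun a b =>
    ∑' z : Lat d, Complex.exp (Complex.I * (zdot d z θ : ℂ)) * ((q z a b : ℝ) : ℂ)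

/-- The formula `q̂_∞^+(θ)` of (1.14). -/
def qhatP (h : CondE3 d n V) (P : Fin s → (Fin d → ℝ) → Matrix (Fin n) (Fin n) ℂ)
    (q0 : Lat d → Matrix (I2 n) (I2 n) ℝ) (θ : Fin d → ℝ) : Matrix (I2 n) (I2 n) ℂ :=
  (4:ℂ)⁻¹ • ∑ σ : Fin s, P2 d n s P σ θ *
    (fourierM d n q0 θ + Cmat d n V h θ * fourierM d n q0 θ * (Cmat d n V h θ)ᴴ) *
    P2 d n s P σ θ

/-- The formula `q̂_∞^−(θ)` of (1.15). -/
def qhatM (h : CondE3 d n V) (ω : Fin s → (Fin d → ℝ) → ℝ)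
    (P : Fin s → (Fin d → ℝ) → Matrix (Fin n) (Fin n) ℂ)
    (q0 : Lat d → Matrix (I2 n) (I2 n) ℝ) (θ : Fin d → ℝ) : Matrix (I2 n) (I2 n) ℂ :=
  (Complex.I / 4) • ∑ σ : Fin s, ((Real.sign (pder d 0 (ω σ) θ) : ℝ) : ℂ) •
    (P2 d n s P σ θ *
      (Cmat d n V h θ * fourierM d n q0 θ - fourierM d n q0 θ * (Cmat d n V h θ)ᴴ) *
      P2 d n s P σ θ)

/-- The combination (1.13):
`Q_∞(z,z') = q_∞(z−z') − q_∞(z−z̃') − q_∞(z̃−z') + q_∞(z̃−z̃')`. -/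
def Qcomb (q : Lat d → Matrix (I2 n) (I2 n) ℂ) (z z' : Lat d) :
    Matrix (I2 n) (I2 n) ℂ :=
  q (z - z') - q (z - til d z') - q (til d z - z') + q (til d z - til d z')


/-- Fourier transform of a complex-matrix-valued function on the lattice. -/
def fourierMC (q : Lat d → Matrix (I2 n) (I2 n) ℂ) (θ : Fin d → ℝ) :
    Matrix (I2 n) (I2 n) ℂ :=
  Matrix.of fun a b =>
    ∑' z : Lat d, Complex.exp (Complex.I * (zdot d z θ : ℂ)) * q z a b

/-- Rapidly decreasing sequences on `ℤ^d` (the space `S(ℤ^d) ⊗ ℝ^n` squared). -/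
def Rapid (Ψ : Conf d n) : Prop :=
  ∀ p : ℕ, ∃ C : ℝ, ∀ z : Lat d,
    Real.sqrt (vsq n (Ψ z)) ≤ C * (1 + znorm d z) ^ (-(p:ℝ))

/-- Fourier transform `Ψ̂(θ)` of a configuration. -/
def PsiHat (Ψ : Conf d n) (θ : Fin d → ℝ) : I2 n → ℂ := fun a =>
  ∑' z : Lat d, Complex.exp (Complex.I * (zdot d z θ : ℂ)) * ((comp2 n (Ψ z) a : ℝ) : ℂ)

/-- The critical set `𝓒 = 𝓒₀ ∪ 𝓒_* ∪ (∪_σ 𝓒_σ)`. -/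
def critSet (ω : Fin s → (Fin d → ℝ) → ℝ) (Cs : Set (Fin d → ℝ)) : Set (Fin d → ℝ) :=
  Cs ∪ {θ | (Vhat d n V θ).det = 0} ∪
    ⋃ σ : Fin s, {θ | θ ∉ Cs ∧ (hess d (ω σ) θ).det = 0}

/-- `Ψ ∈ 𝓢⁰`: rapidly decreasing with `Ψ̂` vanishing in a neighborhood of `𝓒`. -/
def SZero (ω : Fin s → (Fin d → ℝ) → ℝ) (Cs : Set (Fin d → ℝ)) (Ψ : Conf d n) : Prop :=
  Rapid d n Ψ ∧ ∃ U : Set (Fin d → ℝ), IsOpen U ∧ critSet d n V s ω Cs ⊆ U ∧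
    ∀ θ ∈ U, PsiHat d n Ψ θ = 0

/-- Euclidean norm of a `2n`-dimensional complex vector. -/
def vnormC (v : I2 n → ℂ) : ℝ := Real.sqrt (∑ a, ‖v a‖^2)

/-- `Φ(z,t) = (2π)^{-d} ∫_{𝕋^d} e^{−iz·θ} Ĝ_t^*(θ) Ψ̂(θ) dθ`. -/
def PhiC (Ψ : Conf d n) (z : Lat d) (t : ℝ) : I2 n → ℂ := fun a =>
  (((2*Real.pi)^d : ℝ) : ℂ)⁻¹ *
    ∫ θ in box d, Complex.exp (-(Complex.I) * (zdot d z θ : ℂ)) *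
      (((NormedSpace.exp (t • Ahat d n V θ))ᴴ).mulVec (PsiHat d n Ψ θ) a)

/-- `Φ(z',t) = U₊'(t)Ψ(z') = ∑_z G_t^T(z−z') Ψ(z)`. -/
def PhiR (Ψ : Conf d n) (t : ℝ) : Conf d n := fun z' =>
  ∑' z : Lat d, mul2 n ((GreenR d n V t (z - z'))ᵀ) (Ψ z)

/-- `R_t^a(z,z') = ∑_{y,y'} G_t(z−y) Q^a(y,y') G_t^T(z'−y')`. -/
def RtA (Q : Lat d → Lat d → Matrix (I2 n) (I2 n) ℝ) (t : ℝ) (z z' : Lat d) :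
    Matrix (I2 n) (I2 n) ℝ :=
  Matrix.of fun a b => ∑' p : Lat d × Lat d,
    (GreenR d n V t (z - p.1) * Q p.1 p.2 * (GreenR d n V t (z' - p.2))ᵀ) a b

/-- `Q_*(z,z')`: the initial covariance, extended by zero outside `ℤ^d_+ × ℤ^d_+`. -/
def Qstar (μ : Measure (Conf d n)) (y y' : Lat d) : Matrix (I2 n) (I2 n) ℝ :=
  if 0 < y 0 ∧ 0 < y' 0 then Qmat d n μ y y' else 0

/-- `Q^+(y,y') = (1/2) 𝐪₀(y−y')`. -/
def Qplus (q0 : Lat d → Matrix (I2 n) (I2 n) ℝ) (y y' : Lat d) :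
    Matrix (I2 n) (I2 n) ℝ := ((2:ℝ)⁻¹) • q0 (y - y')

/-- `Q^−(y,y') = (1/2) 𝐪₀(y−y') sign(y'_1)`. -/
def Qminus (q0 : Lat d → Matrix (I2 n) (I2 n) ℝ) (y y' : Lat d) :
    Matrix (I2 n) (I2 n) ℝ := ((((y' 0).sign : ℤ) : ℝ) * (2:ℝ)⁻¹) • q0 (y - y')

/-- `Q^r = Q_* − Q^+ − Q^−`. -/
def Qrem (μ : Measure (Conf d n)) (q0 : Lat d → Matrix (I2 n) (I2 n) ℝ)
    (y y' : Lat d) : Matrix (I2 n) (I2 n) ℝ :=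
  Qstar d n μ y y' - Qplus d n q0 y y' - Qminus d n q0 y y'

/-- `⟨Y, 1_S Φ⟩₊`: pairing restricted to a sublattice `S`. -/
def rvOn (S : Set (Lat d)) (Φ Y : Conf d n) : ℝ :=
  ∑' z : LatP d, Set.indicator S (fun w => dot2 n (Y w) (Φ w)) z.1

end HCryst


open HCryst

/-!
Ibragimov's covariance inequality `|Cov(X, Y)| ≤ 2 φ^{1/2} ‖X‖₂ ‖Y‖₂` for `φ`-mixing σ-algebras
is proved for finitely valued `X`, `Y` by Cauchy–Schwarz over the pairs of level sets, and in
general by approximating with simple functions. Applied to two coordinates of the field at sites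
`w, z'` of the half-space it bounds `Q₀(w, z')` by `2 e₀ φ^{1/2}(|w - z'|)`, and this bound passes
to the limit `𝐪₀(z)`. The lattice sum of `φ^{1/2}(|z|)` is controlled by the integral
`∫ r^{d-1} φ^{1/2}(r) dr` because the sphere of radius `k` for the sup norm has at most
`2d (2k+1)^{d-1}` points; the Fourier series of `𝐪₀` then converges uniformly.
-/

namespace ProbabilityTheory

variable {Ω : Type*} {M N m₀ : MeasurableSpace Ω} {μ : Measure Ω}

def eventCov (μ : Measure Ω) (S T : Set Ω) : ℝ := μ.real (S ∩ T) - μ.real S * μ.real T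

def IsPhiMixing (μ : Measure Ω) (M N : MeasurableSpace Ω) (φ : ℝ) : Prop :=
  ∀ S T, MeasurableSet[M] S → MeasurableSet[N] T → |eventCov μ S T| ≤ φ * μ.real T

lemma integral_comp_eq_sum_preimage [IsFiniteMeasure μ] {β : Type*} {X : Ω → β} {R : Finset β}
    (hR : ∀ ω, X ω ∈ R) (hX : ∀ v ∈ R, MeasurableSet (X ⁻¹' {v})) (f : β → ℝ) :
    ∫ ω, f (X ω) ∂μ = ∑ v ∈ R, f v * μ.real (X ⁻¹' {v}) := by
  have hsum : (fun ω => f (X ω)) = fun ω => ∑ v ∈ R, (X ⁻¹' {v}).indicator (fun _ => f v) ω := by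
    funext ω
    rw [Finset.sum_eq_single_of_mem (X ω) (hR ω)
      fun v _ hv => Set.indicator_of_notMem (fun h => hv h.symm) _]
    exact (Set.indicator_of_mem rfl _).symm
  rw [hsum, integral_finsetSum _ fun v hv => (integrable_const (f v)).indicator (hX v hv)]
  refine Finset.sum_congr rfl fun v hv => ?_
  rw [integral_indicator_const _ (hX v hv), smul_eq_mul, mul_comm]

lemma tendsto_integral_mul_of_abs_le_two_mul {u v : Ω → ℝ} {U V : ℕ → Ω → ℝ}
    (hU : ∀ k, AEStronglyMeasurable (U k) μ) (hV : ∀ k, AEStronglyMeasurable (V k) μ)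
    (hUu : ∀ k ω, |U k ω| ≤ 2 * |u ω|) (hVv : ∀ k ω, |V k ω| ≤ 2 * |v ω|)
    (hUt : ∀ ω, Tendsto (U · ω) atTop (𝓝 (u ω))) (hVt : ∀ ω, Tendsto (V · ω) atTop (𝓝 (v ω)))
    (huv : Integrable (fun ω => u ω * v ω) μ) :
    Tendsto (fun k => ∫ ω, U k ω * V k ω ∂μ) atTop (𝓝 (∫ ω, u ω * v ω ∂μ)) :=
  tendsto_integral_of_dominated_convergence (fun ω => 4 * |u ω * v ω|)
    (fun k => (hU k).mul (hV k)) (huv.abs.const_mul 4)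
    (fun k => Eventually.of_forall fun ω => by
      rw [Real.norm_eq_abs, abs_mul, abs_mul]
      nlinarith [hUu k ω, hVv k ω, abs_nonneg (U k ω), abs_nonneg (V k ω)])
    (Eventually.of_forall fun ω => (hUt ω).mul (hVt ω))

lemma _root_.Measurable.exists_finite_range_tendsto {α : Type*} [MeasurableSpace α] {X : α → ℝ}
    (hX : Measurable X) :
    ∃ U : ℕ → α → ℝ, (∀ k, Measurable (U k)) ∧ (∀ k, ∃ R : Finset ℝ, ∀ a, U k a ∈ R) ∧
      (∀ k a, |U k a| ≤ 2 * |X a|) ∧ ∀ a, Tendsto (U · a) atTop (𝓝 (X a)) := by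
  let U := SimpleFunc.approxOn X hX Set.univ 0 (Set.mem_univ 0)
  refine ⟨fun k => U k, fun k => (U k).measurable, fun k => ⟨(U k).range, (U k).mem_range_self⟩,
    fun k a => ?_, fun a => SimpleFunc.tendsto_approxOn hX (Set.mem_univ 0) (by simp)⟩
  simpa [two_mul] using SimpleFunc.norm_approxOn_y₀_le hX (Set.mem_univ 0) a k

variable [IsProbabilityMeasure μ]

lemma abs_eventCov_le_measureReal_right (S T : Set Ω) : |eventCov μ S T| ≤ μ.real T := by
  have hST : μ.real (S ∩ T) ≤ μ.real T := measureReal_mono Set.inter_subset_right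
  have hS : μ.real S ≤ 1 := measureReal_le_one
  have : 0 ≤ μ.real S * μ.real T := by positivity
  rw [eventCov, abs_sub_le_iff]
  constructor <;> nlinarith [measureReal_nonneg (μ := μ) (s := S ∩ T),
    measureReal_nonneg (μ := μ) (s := T)]

lemma eventCov_biUnion_left {ι : Type*} (I : Finset ι) {A : ι → Set Ω}
    (hA : ∀ i ∈ I, MeasurableSet (A i)) (hd : (I : Set ι).PairwiseDisjoint A) {T : Set Ω}
    (hT : MeasurableSet T) :
    eventCov μ (⋃ i ∈ I, A i) T = ∑ i ∈ I, eventCov μ (A i) T := by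
  have hAT : μ.real ((⋃ i ∈ I, A i) ∩ T) = ∑ i ∈ I, μ.real (A i ∩ T) := by
    rw [Set.iUnion₂_inter]
    exact measureReal_biUnion_finset (μ := μ) (hd.mono fun i => Set.inter_subset_left)
      fun i hi => (hA i hi).inter hT
  simp only [eventCov, hAT, measureReal_biUnion_finset (μ := μ) hd hA, Finset.sum_mul,
    Finset.sum_sub_distrib]

lemma sum_abs_eventCov_disjoint_right_le {ι : Type*} (J : Finset ι) {B : ι → Set Ω}
    (hB : ∀ j ∈ J, MeasurableSet (B j)) (hd : (J : Set ι).PairwiseDisjoint B) {S : Set Ω}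
    (hS : MeasurableSet S) :
    ∑ j ∈ J, |eventCov μ S (B j)| ≤ 2 * μ.real S := by
  have hSB : ∑ j ∈ J, μ.real (S ∩ B j) ≤ μ.real S := by
    rw [← measureReal_biUnion_finset (μ := μ) (hd.mono fun j => Set.inter_subset_right)
      fun j hj => hS.inter (hB j hj)]
    exact measureReal_mono (Set.iUnion₂_subset fun j _ => Set.inter_subset_left)
  have hB1 : ∑ j ∈ J, μ.real (B j) ≤ 1 := by
    rw [← measureReal_biUnion_finset (μ := μ) hd hB]
    exact measureReal_le_one
  calc ∑ j ∈ J, |eventCov μ S (B j)|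
      ≤ ∑ j ∈ J, (μ.real (S ∩ B j) + μ.real S * μ.real (B j)) := by
        refine Finset.sum_le_sum fun j _ => ?_
        have : 0 ≤ μ.real S * μ.real (B j) := by positivity
        rw [eventCov, abs_sub_le_iff]
        constructor <;> linarith [measureReal_nonneg (μ := μ) (s := S ∩ B j)]
    _ ≤ μ.real S + μ.real S * 1 := by
        rw [Finset.sum_add_distrib, ← Finset.mul_sum]
        gcongr
    _ = 2 * μ.real S := by ring

variable {φ : ℝ}

/-- Splitting by the sign of the covariances, each half is the covariance of a single
`M`-event with `T`. -/
lemma IsPhiMixing.sum_abs_eventCov_disjoint_left_le (hmix : IsPhiMixing μ M N φ) (hM : M ≤ m₀)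
    (hN : N ≤ m₀) {ι : Type*} (I : Finset ι) {A : ι → Set Ω}
    (hA : ∀ i ∈ I, MeasurableSet[M] (A i)) (hd : (I : Set ι).PairwiseDisjoint A) {T : Set Ω}
    (hT : MeasurableSet[N] T) :
    ∑ i ∈ I, |eventCov μ (A i) T| ≤ 2 * φ * μ.real T := by
  classical
  have hunion : ∀ I' ⊆ I, |∑ i ∈ I', eventCov μ (A i) T| ≤ φ * μ.real T := fun I' hI' => by
    rw [← eventCov_biUnion_left I' (fun i hi => hM _ (hA i (hI' hi)))
      (hd.subset (Finset.coe_subset.mpr hI')) (hN _ hT)]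
    exact hmix _ _ (Finset.measurableSet_biUnion I' fun i hi => hA i (hI' hi)) hT
  have hpos := hunion _ (Finset.filter_subset (fun i => 0 ≤ eventCov μ (A i) T) I)
  have hneg := hunion _ (Finset.filter_subset (fun i => ¬ 0 ≤ eventCov μ (A i) T) I)
  rw [← Finset.sum_filter_add_sum_filter_not I (fun i => 0 ≤ eventCov μ (A i) T),
    Finset.sum_congr rfl fun i hi => abs_of_nonneg (Finset.mem_filter.mp hi).2,
    Finset.sum_congr rfl fun i hi => abs_of_neg (not_le.mp (Finset.mem_filter.mp hi).2),
    Finset.sum_neg_distrib]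
  linarith [le_abs_self (∑ i ∈ I with 0 ≤ eventCov μ (A i) T, eventCov μ (A i) T),
    neg_abs_le (∑ i ∈ I with ¬ 0 ≤ eventCov μ (A i) T, eventCov μ (A i) T)]

lemma IsPhiMixing.abs_sum_mul_eventCov_le (hmix : IsPhiMixing μ M N φ) (hM : M ≤ m₀)
    (hN : N ≤ m₀) (hφ : 0 ≤ φ) {ι κ : Type*} (I : Finset ι) (J : Finset κ)
    {A : ι → Set Ω} {B : κ → Set Ω} (hA : ∀ i ∈ I, MeasurableSet[M] (A i))
    (hAd : (I : Set ι).PairwiseDisjoint A) (hB : ∀ j ∈ J, MeasurableSet[N] (B j))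
    (hBd : (J : Set κ).PairwiseDisjoint B) (a : ι → ℝ) (b : κ → ℝ) :
    |∑ i ∈ I, ∑ j ∈ J, a i * b j * eventCov μ (A i) (B j)| ≤
      2 * √φ * (√(∑ i ∈ I, a i ^ 2 * μ.real (A i)) * √(∑ j ∈ J, b j ^ 2 * μ.real (B j))) := by
  set c := fun p : ι × κ => eventCov μ (A p.1) (B p.2)
  have hrows : ∑ p ∈ I ×ˢ J, a p.1 ^ 2 * |c p| ≤ 2 * ∑ i ∈ I, a i ^ 2 * μ.real (A i) := by
    rw [Finset.sum_product, Finset.mul_sum]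
    refine Finset.sum_le_sum fun i hi => ?_
    simp only [c, ← Finset.mul_sum]
    nlinarith [sum_abs_eventCov_disjoint_right_le (μ := μ) J (fun j hj => hN _ (hB j hj)) hBd
      (hM _ (hA i hi)), sq_nonneg (a i)]
  have hcols : ∑ p ∈ I ×ˢ J, b p.2 ^ 2 * |c p| ≤ 2 * φ * ∑ j ∈ J, b j ^ 2 * μ.real (B j) := by
    rw [Finset.sum_product_right, Finset.mul_sum]
    refine Finset.sum_le_sum fun j hj => ?_
    simp only [c, ← Finset.mul_sum]
    nlinarith [hmix.sum_abs_eventCov_disjoint_left_le hM hN I hA hAd (hB j hj), sq_nonneg (b j)]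
  have hCS : (∑ p ∈ I ×ˢ J, a p.1 * b p.2 * c p) ^ 2 ≤
      (∑ p ∈ I ×ˢ J, a p.1 ^ 2 * |c p|) * ∑ p ∈ I ×ˢ J, b p.2 ^ 2 * |c p| :=
    Finset.sum_sq_le_sum_mul_sum_of_sq_le_mul _ (fun _ _ => by positivity)
      (fun _ _ => by positivity) fun p _ => le_of_eq <| by
        rw [show a p.1 ^ 2 * |c p| * (b p.2 ^ 2 * |c p|) = (a p.1 * b p.2) ^ 2 * |c p| ^ 2 by ring,
          sq_abs, mul_pow]
  rw [← Finset.sum_product' (f := fun i j => a i * b j * c (i, j))]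
  calc |∑ p ∈ I ×ˢ J, a p.1 * b p.2 * c p|
      ≤ √((2 * ∑ i ∈ I, a i ^ 2 * μ.real (A i)) * (2 * φ * ∑ j ∈ J, b j ^ 2 * μ.real (B j))) := by
        refine Real.abs_le_sqrt (hCS.trans ?_)
        gcongr
    _ = 2 * √φ * (√(∑ i ∈ I, a i ^ 2 * μ.real (A i)) * √(∑ j ∈ J, b j ^ 2 * μ.real (B j))) := by
        rw [mul_mul_mul_comm, ← mul_assoc, Real.sqrt_mul (by positivity),
          Real.sqrt_mul (by positivity), Real.sqrt_mul (by positivity),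
          Real.sqrt_mul' _ (by positivity)]
        linear_combination √φ * √(∑ i ∈ I, a i ^ 2 * μ.real (A i)) *
          √(∑ j ∈ J, b j ^ 2 * μ.real (B j)) * Real.mul_self_sqrt zero_le_two

lemma IsPhiMixing.abs_integral_mul_sub_le_of_finite_range (hmix : IsPhiMixing μ M N φ)
    (hM : M ≤ m₀) (hN : N ≤ m₀) (hφ : 0 ≤ φ) {X Y : Ω → ℝ} {RX RY : Finset ℝ}
    (hRX : ∀ ω, X ω ∈ RX) (hRY : ∀ ω, Y ω ∈ RY) (hXf : ∀ v, MeasurableSet[M] (X ⁻¹' {v}))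
    (hYf : ∀ w, MeasurableSet[N] (Y ⁻¹' {w})) :
    |∫ ω, X ω * Y ω ∂μ - (∫ ω, X ω ∂μ) * ∫ ω, Y ω ∂μ| ≤
      2 * √φ * (√(∫ ω, X ω ^ 2 ∂μ) * √(∫ ω, Y ω ^ 2 ∂μ)) := by
  have hX (f : ℝ → ℝ) : ∫ ω, f (X ω) ∂μ = ∑ v ∈ RX, f v * μ.real (X ⁻¹' {v}) :=
    integral_comp_eq_sum_preimage hRX (fun v _ => hM _ (hXf v)) f
  have hY (f : ℝ → ℝ) : ∫ ω, f (Y ω) ∂μ = ∑ w ∈ RY, f w * μ.real (Y ⁻¹' {w}) :=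
    integral_comp_eq_sum_preimage hRY (fun w _ => hN _ (hYf w)) f
  have hXY : ∫ ω, X ω * Y ω ∂μ =
      ∑ v ∈ RX, ∑ w ∈ RY, v * w * μ.real (X ⁻¹' {v} ∩ Y ⁻¹' {w}) := by
    rw [← Finset.sum_product' (f := fun v w => v * w * μ.real (X ⁻¹' {v} ∩ Y ⁻¹' {w}))]
    simp only [← Set.mk_preimage_prod, Set.singleton_prod_singleton]
    exact integral_comp_eq_sum_preimage (X := fun ω => (X ω, Y ω))
      (fun ω => Finset.mem_product.2 ⟨hRX ω, hRY ω⟩)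
      (fun p _ => by
        simpa only [← Set.mk_preimage_prod, Set.singleton_prod_singleton] using
          (hM _ (hXf p.1)).inter (hN _ (hYf p.2))) fun p => p.1 * p.2
  have hcov : ∫ ω, X ω * Y ω ∂μ - (∫ ω, X ω ∂μ) * ∫ ω, Y ω ∂μ =
      ∑ v ∈ RX, ∑ w ∈ RY, v * w * eventCov μ (X ⁻¹' {v}) (Y ⁻¹' {w}) := by
    rw [hXY, hX fun v => v, hY fun w => w, Finset.sum_mul_sum, ← Finset.sum_sub_distrib]
    refine Finset.sum_congr rfl fun v _ => ?_
    rw [← Finset.sum_sub_distrib]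
    refine Finset.sum_congr rfl fun w _ => ?_
    rw [eventCov]
    ring
  rw [hcov, hX fun v => v ^ 2, hY fun w => w ^ 2]
  exact hmix.abs_sum_mul_eventCov_le hM hN hφ _ _ (fun v _ => hXf v)
    (Set.pairwiseDisjoint_fiber _ _) (fun w _ => hYf w) (Set.pairwiseDisjoint_fiber _ _) _ _

theorem IsPhiMixing.abs_integral_mul_sub_le (hmix : IsPhiMixing μ M N φ) (hM : M ≤ m₀)
    (hN : N ≤ m₀) (hφ : 0 ≤ φ) {X Y : Ω → ℝ} (hXm : Measurable[M] X) (hYm : Measurable[N] Y)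
    (hX : MemLp X 2 μ) (hY : MemLp Y 2 μ) :
    |∫ ω, X ω * Y ω ∂μ - (∫ ω, X ω ∂μ) * ∫ ω, Y ω ∂μ| ≤
      2 * √φ * (√(∫ ω, X ω ^ 2 ∂μ) * √(∫ ω, Y ω ^ 2 ∂μ)) := by
  obtain ⟨U, hUm, hUR, hUX, hUt⟩ := @Measurable.exists_finite_range_tendsto _ M X hXm
  obtain ⟨V, hVm, hVR, hVY, hVt⟩ := @Measurable.exists_finite_range_tendsto _ N Y hYm
  have hU : ∀ k, AEStronglyMeasurable (U k) μ :=
    fun k => ((hUm k).mono hM le_rfl).aestronglyMeasurable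
  have hV : ∀ k, AEStronglyMeasurable (V k) μ :=
    fun k => ((hVm k).mono hN le_rfl).aestronglyMeasurable
  have hone : ∀ (k : ℕ) (ω : Ω), |(1 : ℝ)| ≤ 2 * |(1 : ℝ)| := fun _ _ => by norm_num
  have hXY := tendsto_integral_mul_of_abs_le_two_mul hU hV hUX hVY hUt hVt
    (hX.integrable_mul hY)
  have hX1 := tendsto_integral_mul_of_abs_le_two_mul hU (fun _ => aestronglyMeasurable_const)
    hUX hone hUt (fun _ => tendsto_const_nhds) ((hX.integrable one_le_two).mul_const 1)
  have h1Y := tendsto_integral_mul_of_abs_le_two_mul (fun _ => aestronglyMeasurable_const) hV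
    hone hVY (fun _ => tendsto_const_nhds) hVt ((hY.integrable one_le_two).const_mul 1)
  have hXX := tendsto_integral_mul_of_abs_le_two_mul hU hU hUX hUX hUt hUt
    (hX.integrable_mul hX)
  have hYY := tendsto_integral_mul_of_abs_le_two_mul hV hV hVY hVY hVt hVt
    (hY.integrable_mul hY)
  simp only [mul_one, one_mul, ← sq] at hX1 h1Y hXX hYY
  refine le_of_tendsto_of_tendsto' (hXY.sub (hX1.mul h1Y)).abs
    (((hXX.sqrt).mul hYY.sqrt).const_mul _) fun k => ?_
  obtain ⟨RX, hRX⟩ := hUR k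
  obtain ⟨RY, hRY⟩ := hVR k
  exact hmix.abs_integral_mul_sub_le_of_finite_range hM hN hφ hRX hRY
    (fun v => hUm k (measurableSet_singleton v)) fun w => hVm k (measurableSet_singleton w)

end ProbabilityTheory

lemma summable_add_one_pow_mul_of_integrableOn {g : ℝ → ℝ} (hg0 : ∀ r, 0 ≤ g r)
    (hg : Antitone g) {m : ℕ} (hint : IntegrableOn (fun r => r ^ m * g r) (Set.Ioi 0)) :
    Summable fun k : ℕ => ((k : ℝ) + 1) ^ m * g k := by
  set F := (Set.Ioi (0 : ℝ)).indicator fun r => r ^ m * g r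
  have hF : Integrable F := (integrable_indicator_iff measurableSet_Ioi).2 hint
  have hsum : Summable fun k : ℕ => ∫ r in (k : ℝ)..k + 1, F r :=
    ((hF.hasSum_intervalIntegral 0).summable.comp_injective Nat.cast_injective).congr
      fun k => by simp
  refine (summable_nat_add_iff 2).1 <| Summable.of_nonneg_of_le
    (fun k => mul_nonneg (by positivity) (hg0 _)) (fun k => ?_)
    ((hsum.comp_injective (add_left_injective 1)).mul_left (3 ^ m))
  have hlow : ((k : ℝ) + 1) ^ m * g (k + 2) ≤ ∫ r in (k + 1 : ℝ)..k + 2, F r := by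
    calc ((k : ℝ) + 1) ^ m * g (k + 2)
        = ∫ _ in (k + 1 : ℝ)..k + 2, ((k : ℝ) + 1) ^ m * g (k + 2) := by
          rw [intervalIntegral.integral_const, smul_eq_mul]
          ring
      _ ≤ ∫ r in (k + 1 : ℝ)..k + 2, F r := by
          refine intervalIntegral.integral_mono_on (by linarith) intervalIntegrable_const
            hF.intervalIntegrable fun r hr => ?_
          have hr0 : (0 : ℝ) < r := by linarith [hr.1]
          rw [show F r = r ^ m * g r from Set.indicator_of_mem (Set.mem_Ioi.2 hr0) _]
          exact mul_le_mul (pow_le_pow_left₀ (by positivity) hr.1 m) (hg hr.2) (hg0 _)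
            (by positivity)
  calc (((k + 2 : ℕ) : ℝ) + 1) ^ m * g ((k + 2 : ℕ) : ℝ)
      ≤ (3 * ((k : ℝ) + 1)) ^ m * g (k + 2) := by
        push_cast
        gcongr
        · exact hg0 _
        · linarith
    _ = 3 ^ m * (((k : ℝ) + 1) ^ m * g (k + 2)) := by rw [mul_pow]; ring
    _ ≤ 3 ^ m * ∫ r in ((k + 1 : ℕ) : ℝ)..((k + 1 : ℕ) : ℝ) + 1, F r := by
        push_cast
        rw [show (k : ℝ) + 1 + 1 = k + 2 by ring]
        gcongr

namespace HCryst

open ProbabilityTheory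

variable {m : Type*} [Fintype m]

lemma abs_apply_le_mnormR (M : Matrix m m ℝ) (a b : m) : |M a b| ≤ mnormR M := by
  rw [mnormR, ← Real.sqrt_sq_eq_abs]
  refine Real.sqrt_le_sqrt ?_
  calc M a b ^ 2 ≤ ∑ b', M a b' ^ 2 :=
        Finset.single_le_sum (f := fun b' => M a b' ^ 2) (fun _ _ => sq_nonneg _)
          (Finset.mem_univ b)
    _ ≤ ∑ a', ∑ b', M a' b' ^ 2 :=
        Finset.single_le_sum (f := fun a' => ∑ b', M a' b' ^ 2)
          (fun _ _ => Finset.sum_nonneg fun _ _ => sq_nonneg _) (Finset.mem_univ a)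

lemma mnormR_le_of_abs_apply_le {M : Matrix m m ℝ} {K : ℝ} (hK : 0 ≤ K)
    (h : ∀ a b, |M a b| ≤ K) : mnormR M ≤ Fintype.card m * K := by
  calc mnormR M ≤ √(∑ _a : m, ∑ _b : m, K ^ 2) :=
        Real.sqrt_le_sqrt <| Finset.sum_le_sum fun a _ => Finset.sum_le_sum fun b _ =>
          sq_le_sq' (abs_le.1 (h a b)).1 (abs_le.1 (h a b)).2
    _ = Fintype.card m * K := by
        rw [Finset.sum_const, Finset.sum_const, Finset.card_univ, nsmul_eq_mul, nsmul_eq_mul,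
          show (Fintype.card m : ℝ) * (Fintype.card m * K ^ 2) = (Fintype.card m * K) ^ 2 by ring,
          Real.sqrt_sq (by positivity)]

variable {d n : ℕ}

lemma continuous_fourierM_apply {q : Lat d → Matrix (I2 n) (I2 n) ℝ}
    (hq : Summable fun z => mnormR (q z)) (a b : I2 n) :
    Continuous fun θ => fourierM d n q θ a b := by
  refine continuous_tsum (fun z => ?_) hq fun z θ => ?_
  · have : Continuous (zdot d z) := by unfold zdot; fun_prop
    fun_prop
  · rw [norm_mul, Complex.norm_exp_I_mul_ofReal, one_mul, Complex.norm_real, Real.norm_eq_abs]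
    exact abs_apply_le_mnormR (q z) a b

lemma measurable_comp2 (a : I2 n) : Measurable fun v : Pt n => comp2 n v a := by
  cases a with
  | inl i => exact (measurable_pi_apply i).comp measurable_fst
  | inr i => exact (measurable_pi_apply i).comp measurable_snd

lemma cylSig_le (A : Set (Lat d)) : cylSig d n A ≤ MeasurableSpace.pi :=
  measurable_iff_comap_le.1 (measurable_pi_lambda _ fun z => measurable_pi_apply z.1)

lemma measurable_comp2_cylSig {A : Set (Lat d)} {w : Lat d} (hw : w ∈ A) (a : I2 n) :
    Measurable[cylSig d n A] fun Y : Conf d n => comp2 n (Y w) a :=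
  (measurable_comp2 a).comp <| (measurable_pi_apply (⟨w, hw⟩ : A)).comp <|
    comap_measurable fun (Y : Conf d n) (x : A) => Y x

lemma Qmat_self_apply_nonneg (μ : Measure (Conf d n)) (z : Lat d) (a : I2 n) :
    0 ≤ Qmat d n μ z z a a :=
  integral_nonneg fun _ => mul_self_nonneg _

variable {μ : Measure (Conf d n)} {e₀ : ℝ}

lemma CondS3.Qmat_self_apply_le (hS3 : CondS3 d n μ e₀) (z : Lat d) (a : I2 n) :
    Qmat d n μ z z a a ≤ e₀ :=
  (Finset.single_le_sum (fun c _ => Qmat_self_apply_nonneg μ z c) (Finset.mem_univ a)).trans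
    (hS3.2 z)

lemma CondS3.nonneg (hS3 : CondS3 d n μ e₀) : 0 ≤ e₀ :=
  (Finset.sum_nonneg fun c _ => Qmat_self_apply_nonneg μ 0 c).trans (hS3.2 0)

lemma CondS3.memLp_comp2 (hS3 : CondS3 d n μ e₀) (z : Lat d) (a : I2 n) :
    MemLp (fun Y : Conf d n => comp2 n (Y z) a) 2 μ := by
  have hm : Measurable fun Y : Conf d n => comp2 n (Y z) a :=
    (measurable_comp2 a).comp (measurable_pi_apply z)
  exact (memLp_two_iff_integrable_sq hm.aestronglyMeasurable).2 <| by
    simpa only [sq] using hS3.1 z z a a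

def supNorm (z : Lat d) : ℕ := Finset.univ.sup fun i => (z i).natAbs

lemma natAbs_le_supNorm (z : Lat d) (i : Fin d) : (z i).natAbs ≤ supNorm z :=
  Finset.le_sup (f := fun i => (z i).natAbs) (Finset.mem_univ i)

variable [NeZero d]

lemma exists_natAbs_eq_supNorm (z : Lat d) : ∃ i, (z i).natAbs = supNorm z := by
  obtain ⟨i, -, hi⟩ := Finset.exists_mem_eq_sup Finset.univ Finset.univ_nonempty
    fun i => (z i).natAbs
  exact ⟨i, hi.symm⟩

lemma supNorm_le_znorm (z : Lat d) : (supNorm z : ℝ) ≤ znorm d z := by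
  obtain ⟨i, hi⟩ := exists_natAbs_eq_supNorm z
  rw [← hi, Nat.cast_natAbs, Int.cast_abs, znorm, ← Real.sqrt_sq_eq_abs]
  exact Real.sqrt_le_sqrt <|
    Finset.single_le_sum (f := fun j => ((z j : ℝ)) ^ 2) (fun j _ => sq_nonneg _)
      (Finset.mem_univ i)

open Finset in
/-- A point of sup norm `k` lies in one of the `2d` faces of the cube `[-k, k]^d`. -/
lemma card_filter_supNorm_eq_le (s : Finset (Lat d)) (k : ℕ) :
    #{z ∈ s | supNorm z = k} ≤ 2 * d * (2 * k + 1) ^ (d - 1) := by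
  classical
  set face := fun i : Fin d => Fintype.piFinset
    (Function.update (fun _ => Finset.Icc (-(k : ℤ)) k) i {-(k : ℤ), (k : ℤ)})
  have hsub : {z ∈ s | supNorm z = k} ⊆ Finset.univ.biUnion face := by
    intro z hz
    obtain ⟨-, hzk⟩ := Finset.mem_filter.1 hz
    obtain ⟨i, hi⟩ := exists_natAbs_eq_supNorm z
    refine Finset.mem_biUnion.2 ⟨i, Finset.mem_univ _, Fintype.mem_piFinset.2 fun j => ?_⟩
    rcases eq_or_ne j i with rfl | hj
    · rw [Function.update_self]
      simp only [Finset.mem_insert, Finset.mem_singleton]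
      omega
    · rw [Function.update_of_ne hj, Finset.mem_Icc]
      have := natAbs_le_supNorm z j
      omega
  have hface : ∀ i, #(face i) ≤ 2 * (2 * k + 1) ^ (d - 1) := fun i => by
    have hcard : ∀ j,
        #(Function.update (fun _ => Finset.Icc (-(k : ℤ)) k) i {-(k : ℤ), (k : ℤ)} j) =
          Function.update (fun _ => 2 * k + 1) i #{-(k : ℤ), (k : ℤ)} j := fun j => by
      rw [Function.apply_update (fun _ => Finset.card)]
      congr 1
      funext
      simp only [Int.card_Icc]
      omega
    rw [Fintype.card_piFinset, Finset.prod_congr rfl fun j _ => hcard j,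
      Finset.prod_update_of_mem (Finset.mem_univ i), Finset.prod_const, Finset.card_sdiff,
      Finset.card_univ, Fintype.card_fin, Finset.inter_univ, Finset.card_singleton]
    exact Nat.mul_le_mul_right _ Finset.card_le_two
  calc #{z ∈ s | supNorm z = k} ≤ ∑ i, #(face i) :=
        (Finset.card_le_card hsub).trans Finset.card_biUnion_le
    _ ≤ ∑ _i : Fin d, 2 * (2 * k + 1) ^ (d - 1) := Finset.sum_le_sum fun i _ => hface i
    _ = 2 * d * (2 * k + 1) ^ (d - 1) := by
        simp only [Finset.sum_const, Finset.card_univ, Fintype.card_fin, smul_eq_mul]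
        ring

open Finset in
lemma summable_comp_znorm_of_integrableOn {g : ℝ → ℝ} (hg0 : ∀ r, 0 ≤ g r) (hg : Antitone g)
    (hint : IntegrableOn (fun r => r ^ (d - 1) * g r) (Set.Ioi 0)) :
    Summable fun z : Lat d => g (znorm d z) := by
  classical
  set G : ℕ → ℝ := fun k => ((2 * d * (2 * k + 1) ^ (d - 1) : ℕ) : ℝ) * g k
  have hG0 : ∀ k, 0 ≤ G k := fun k => mul_nonneg (Nat.cast_nonneg _) (hg0 _)
  have hG : Summable G := by
    refine Summable.of_nonneg_of_le hG0 (fun k => ?_)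
      ((summable_add_one_pow_mul_of_integrableOn hg0 hg hint).mul_left (2 * d * 2 ^ (d - 1) : ℝ))
    calc G k = 2 * d * (2 * (k : ℝ) + 1) ^ (d - 1) * g k := by simp only [G]; push_cast; rfl
      _ ≤ 2 * d * (2 * ((k : ℝ) + 1)) ^ (d - 1) * g k := by
        gcongr
        · exact hg0 _
        · linarith
      _ = 2 * d * 2 ^ (d - 1) * (((k : ℝ) + 1) ^ (d - 1) * g k) := by rw [mul_pow]; ring
  have hsup : Summable fun z : Lat d => g (supNorm z) := by
    refine summable_of_sum_le (c := ∑' k, G k) (fun z => hg0 _) fun s => ?_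
    rw [Finset.sum_comp (fun k : ℕ => g k) supNorm]
    calc ∑ k ∈ s.image supNorm, #{z ∈ s | supNorm z = k} • g k
        ≤ ∑ k ∈ s.image supNorm, G k := Finset.sum_le_sum fun k _ => by
          rw [nsmul_eq_mul]
          exact mul_le_mul_of_nonneg_right (by exact_mod_cast card_filter_supNorm_eq_le s k)
            (hg0 _)
      _ ≤ ∑' k, G k := hG.sum_le_tsum _ fun k _ => hG0 k
  exact Summable.of_nonneg_of_le (fun z => hg0 _) (fun z => hg (supNorm_le_znorm z)) hsup

def mixingRatios (μ : Measure (Conf d n)) (r : ℝ) : Set ℝ :=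
  {x | ∃ A B : Set (Lat d), (∀ a ∈ A, 0 < a 0) ∧ (∀ b ∈ B, 0 < b 0) ∧
    (∀ a ∈ A, ∀ b ∈ B, r ≤ znorm d (a - b)) ∧
    ∃ SA SB : Set (Conf d n), MeasurableSet[cylSig d n A] SA ∧
      MeasurableSet[cylSig d n B] SB ∧ 0 < μ SB ∧ x = |eventCov μ SA SB| / μ.real SB}

lemma phiMix_eq_sSup_mixingRatios (μ : Measure (Conf d n)) (r : ℝ) :
    phiMix d n μ r = sSup (mixingRatios μ r) := rfl

variable [IsProbabilityMeasure μ]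

lemma zero_mem_mixingRatios (r : ℝ) : (0 : ℝ) ∈ mixingRatios μ r :=
  ⟨∅, ∅, by simp, by simp, by simp, Set.univ, Set.univ, MeasurableSet.univ, MeasurableSet.univ,
    by simp, by simp [eventCov]⟩

lemma le_one_of_mem_mixingRatios {r x : ℝ} (hx : x ∈ mixingRatios μ r) : x ≤ 1 := by
  obtain ⟨-, -, -, -, -, SA, SB, -, -, -, rfl⟩ := hx
  exact div_le_one_of_le₀ (abs_eventCov_le_measureReal_right SA SB) measureReal_nonneg

lemma bddAbove_mixingRatios (r : ℝ) : BddAbove (mixingRatios μ r) :=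
  ⟨1, fun _ => le_one_of_mem_mixingRatios⟩

lemma phiMix_nonneg (r : ℝ) : 0 ≤ phiMix d n μ r := by
  rw [phiMix_eq_sSup_mixingRatios]
  exact le_csSup (bddAbove_mixingRatios r) (zero_mem_mixingRatios r)

lemma phiMix_antitone : Antitone (phiMix d n μ) := fun r₁ r₂ h => by
  simp only [phiMix_eq_sSup_mixingRatios]
  exact csSup_le_csSup (bddAbove_mixingRatios r₁) ⟨0, zero_mem_mixingRatios r₂⟩
    fun _ ⟨A, B, hA, hB, hAB, hx⟩ => ⟨A, B, hA, hB, fun a ha b hb => h.trans (hAB a ha b hb), hx⟩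

lemma isPhiMixing_cylSig {A B : Set (Lat d)} (hA : ∀ a ∈ A, 0 < a 0) (hB : ∀ b ∈ B, 0 < b 0)
    {r : ℝ} (hAB : ∀ a ∈ A, ∀ b ∈ B, r ≤ znorm d (a - b)) :
    IsPhiMixing μ (cylSig d n A) (cylSig d n B) (phiMix d n μ r) := by
  intro SA SB hSA hSB
  rcases eq_or_ne (μ SB) 0 with h0 | hne
  · have : μ.real SB = 0 := by simp [Measure.real, h0]
    simpa [this] using abs_eventCov_le_measureReal_right (μ := μ) SA SB
  · rw [← div_le_iff₀ (show 0 < μ.real SB from ENNReal.toReal_pos hne (measure_ne_top μ SB))]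
    rw [phiMix_eq_sSup_mixingRatios]
    exact le_csSup (bddAbove_mixingRatios r)
      ⟨A, B, hA, hB, hAB, SA, SB, hSA, hSB, pos_iff_ne_zero.2 hne, rfl⟩

lemma abs_Qmat_apply_le (hS1 : CondS1 d n μ) (hS3 : CondS3 d n μ e₀) {w z : Lat d}
    (hw : 0 < w 0) (hz : 0 < z 0) (a b : I2 n) :
    |Qmat d n μ w z a b| ≤ 2 * √(phiMix d n μ (znorm d (w - z))) * e₀ := by
  have hmix := isPhiMixing_cylSig (μ := μ) (A := {w}) (B := {z}) (by simpa using hw)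
    (by simpa using hz) (r := znorm d (w - z)) (by simp)
  have hcov := hmix.abs_integral_mul_sub_le (cylSig_le _) (cylSig_le _) (phiMix_nonneg _)
    (measurable_comp2_cylSig (Set.mem_singleton w) a)
    (measurable_comp2_cylSig (Set.mem_singleton z) b) (hS3.memLp_comp2 w a)
    (hS3.memLp_comp2 z b)
  rw [(hS1 w a).2, zero_mul, sub_zero] at hcov
  have hsq (y : Lat d) (c : I2 n) : ∫ Y, comp2 n (Y y) c ^ 2 ∂μ ≤ e₀ := by
    simp only [sq]
    exact hS3.Qmat_self_apply_le y c
  calc |Qmat d n μ w z a b|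
      ≤ 2 * √(phiMix d n μ (znorm d (w - z))) *
          (√(∫ Y, comp2 n (Y w) a ^ 2 ∂μ) * √(∫ Y, comp2 n (Y z) b ^ 2 ∂μ)) := hcov
    _ ≤ 2 * √(phiMix d n μ (znorm d (w - z))) * (√e₀ * √e₀) := by gcongr <;> exact hsq _ _
    _ = 2 * √(phiMix d n μ (znorm d (w - z))) * e₀ := by rw [Real.mul_self_sqrt hS3.nonneg]

/-- The limit in `CondS2` is taken along pairs of sites deep inside the half-space, where the
mixing bound applies. -/
lemma CondS2.abs_apply_le {α : ℝ} {q0 : Lat d → Matrix (I2 n) (I2 n) ℝ}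
    (hS2 : CondS2 d n α μ q0) (hS1 : CondS1 d n μ) (hS3 : CondS3 d n μ e₀) (z : Lat d)
    (a b : I2 n) :
    |q0 z a b| ≤ 2 * √(phiMix d n μ (znorm d z)) * e₀ := by
  have hlim := tendsto_pi_nhds.1 (tendsto_pi_nhds.1 (hS2.2.2.1 z) a) b
  refine le_of_tendsto hlim.abs ?_
  filter_upwards [eventually_gt_atTop (-(z 0)).toNat] with y hy
  have hdiff : Function.update z 0 (z 0 + y) - (fun i => if i = 0 then (y : ℤ) else 0) = z := by
    funext i
    rcases eq_or_ne i 0 with rfl | hi <;> simp [*]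
  simpa only [hdiff] using abs_Qmat_apply_le (w := Function.update z 0 (z 0 + y))
    (z := fun i => if i = 0 then (y : ℤ) else 0) hS1 hS3
    (by rw [Function.update_self]; omega) (by simp only [↓reduceIte, Int.natCast_pos]; omega) a b

end HCryst

theorem limit_correlation_regularity_general
    (d n : ℕ) [NeZero d] (α : ℝ)
    (μ₀ : MeasureTheory.Measure (Conf d n)) (hprob : ProbHP d n α μ₀)
    (hS1 : CondS1 d n μ₀)
    (q0 : HCryst.Lat d → Matrix (I2 n) (I2 n) ℝ) (hS2 : CondS2 d n α μ₀ q0)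
    (e₀ : ℝ) (hS3 : CondS3 d n μ₀ e₀) (hS4 : CondS4 d n μ₀) :
    ∃ C : ℝ, 0 < C ∧
      (∀ z : HCryst.Lat d,
        mnormR (q0 z) ≤ C * e₀ * Real.sqrt (phiMix d n μ₀ (znorm d z))) ∧
      Summable (fun z : HCryst.Lat d => mnormR (q0 z)) ∧
      (∀ a b : I2 n, Continuous fun θ : Fin d → ℝ => fourierM d n q0 θ a b) := by
  have hμ : IsProbabilityMeasure μ₀ := hprob.1
  have he₀ : 0 ≤ e₀ := hS3.nonneg
  have hbound (z : Lat d) : mnormR (q0 z) ≤ 4 * n * e₀ * √(phiMix d n μ₀ (znorm d z)) := by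
    have := mnormR_le_of_abs_apply_le (by positivity) (hS2.abs_apply_le hS1 hS3 z)
    simp only [I2, Fintype.card_sum, Fintype.card_fin] at this
    push_cast at this
    linarith
  have hsum : Summable fun z => mnormR (q0 z) :=
    Summable.of_nonneg_of_le (fun z => Real.sqrt_nonneg _) hbound
      ((summable_comp_znorm_of_integrableOn (fun _ => Real.sqrt_nonneg _)
        (fun _ _ h => Real.sqrt_le_sqrt (phiMix_antitone h)) hS4.2).mul_left _)
  refine ⟨4 * n + 1, by positivity, fun z => (hbound z).trans ?_, hsum,
    continuous_fourierM_apply hsum⟩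
  gcongr
  linarith

/-- Proposition 5.2 (ii): the limit correlation functions `𝐪₀`
decay like `φ^{1/2}`, are summable, and have continuous Fourier transform. -/
theorem limit_correlation_regularity
    (d n : ℕ) [NeZero d] (hd : 1 ≤ d) (hn : 1 ≤ n) (α : ℝ)
    (μ₀ : MeasureTheory.Measure (Conf d n)) (hprob : ProbHP d n α μ₀)
    (hS1 : CondS1 d n μ₀)
    (q0 : HCryst.Lat d → Matrix (I2 n) (I2 n) ℝ) (hS2 : CondS2 d n α μ₀ q0)
    (e₀ : ℝ) (hS3 : CondS3 d n μ₀ e₀) (hS4 : CondS4 d n μ₀) :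
    ∃ C : ℝ, 0 < C ∧
      (∀ z : HCryst.Lat d,
        mnormR (q0 z) ≤ C * e₀ * Real.sqrt (phiMix d n μ₀ (znorm d z))) ∧
      Summable (fun z : HCryst.Lat d => mnormR (q0 z)) ∧
      (∀ a b : I2 n, Continuous fun θ : Fin d → ℝ => fourierM d n q0 θ a b) :=
  limit_correlation_regularity_general d n α μ₀ hprob hS1 q0 hS2 e₀ hS3 hS4
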